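/- Let t ≥ 2 and let H be the hypergraph whose pairwise distinct vertices are v1,…,vt together with w_{i,1}, w_{i,2} for 1 ≤ i ≤ t−1, and whose hyperedges are {v1, w_{1,1}, w_{1,2}}, {v_t, w_{t−1,1}, w_{t−1,2}}, and {v_i, w_{i−1,1}, w_{i−1,2}, w_{i,1}, w_{i,2}} for 2 ≤ i ≤ t−1. In every segment representation (α, β) of H, all the points α(v_i) (1 ≤ i ≤ t) and α(w_{i,j}) (1 ≤ i ≤ t−1, j ∈ {1,2}) are collinear, and for every 2 ≤ i ≤ t−1 the point α(v_i) lies in the open segment between α(v_{i−1}) and α(v_{i+1}). -/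

import Mathlib

set_option maxRecDepth 8000

abbrev Pt : Type := ℝ × ℝ

def IsLine (L : Set Pt) : Prop :=
  ∃ a b : Pt, a ≠ b ∧ L = (affineSpan ℝ {a, b} : Set Pt)

def IsSegment (S : Set Pt) : Prop :=
  ∃ a b : Pt, a ≠ b ∧ S = segment ℝ a b

structure FinsetHypergraph (ι : Type) where
  V : Finset ι
  E : Finset (Finset ι)
  edge_nonempty : ∀ e ∈ E, e.Nonempty
  edge_subset : ∀ e ∈ E, e ⊆ V

structure LineRep {ι : Type} (H : FinsetHypergraph ι) where
  α : ι → Pt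
  β : Finset ι → Set Pt
  α_inj : Set.InjOn α ↑H.V
  β_inj : Set.InjOn β ↑H.E
  β_isLine : ∀ e ∈ H.E, IsLine (β e)
  incidence : ∀ v ∈ H.V, ∀ e ∈ H.E, (v ∈ e ↔ α v ∈ β e)

structure SegmentRep {ι : Type} (H : FinsetHypergraph ι) where
  α : ι → Pt
  β : Finset ι → Set Pt
  α_inj : Set.InjOn α ↑H.V
  β_inj : Set.InjOn β ↑H.E
  β_isSegment : ∀ e ∈ H.E, IsSegment (β e)
  incidence : ∀ v ∈ H.V, ∀ e ∈ H.E, (v ∈ e ↔ α v ∈ β e)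

def SegmentRep.Strict {ι : Type} {H : FinsetHypergraph ι} (R : SegmentRep H) : Prop :=
  ∀ e ∈ H.E, ∀ e' ∈ H.E, e ≠ e' → (R.β e ∩ R.β e').Subsingleton

def LineRep.CrossingFree {ι : Type} {H : FinsetHypergraph ι} (R : LineRep H) : Prop :=
  ∀ e ∈ H.E, ∀ e' ∈ H.E, ((R.β e ∩ R.β e').Nonempty ↔ ∃ v, v ∈ e ∧ v ∈ e')

def SegmentRep.CrossingFree {ι : Type} {H : FinsetHypergraph ι} (R : SegmentRep H) : Prop :=
  ∀ e ∈ H.E, ∀ e' ∈ H.E, ((R.β e ∩ R.β e').Nonempty ↔ ∃ v, v ∈ e ∧ v ∈ e')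

/-!
Segments sharing two distinct points lie on a common line, and consecutive hyperedges share the two
points `w i 0 ≠ w i 1`; hence every segment, and with it every vertex, lies on the line through
`w 1 0` and `w 1 1`. On that line each segment is an interval, and the intervals of the hyperedges
`i - 1`, `i`, `i + 1` can only meet as the incidences prescribe if
`v (i - 1), w (i - 1) 0, v i, w i 0, v (i + 1)` appear in this order or its reverse.
-/

theorem Collinear.affineSpan {k V P : Type*} [DivisionRing k] [AddCommGroup V] [Module k V]
    [AddTorsor V P] {s : Set P} (h : Collinear k s) : Collinear k (affineSpan k s : Set P) := by
  rwa [Collinear, ← AffineSubspace.direction_eq_vectorSpan, direction_affineSpan]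

theorem IsSegment.convex {S : Set Pt} (h : IsSegment S) : Convex ℝ S := by
  obtain ⟨a, b, -, rfl⟩ := h
  exact convex_segment a b

theorem IsSegment.collinear {S : Set Pt} (h : IsSegment S) : Collinear ℝ S := by
  obtain ⟨a, b, -, rfl⟩ := h
  exact (collinear_pair ℝ a b).affineSpan.subset fun z hz =>
    (mem_segment_iff_wbtw.1 hz).mem_affineSpan

theorem collinear_biUnion_of_chain {k V P : Type*} [DivisionRing k] [AddCommGroup V]
    [Module k V] [AddTorsor V P] {S : ℕ → Set P} {x y : ℕ → P} {t : ℕ} (ht : 1 < t)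
    (hS : ∀ i, 1 ≤ i → i ≤ t → Collinear k (S i)) (hxy : ∀ i, 1 ≤ i → i < t → x i ≠ y i)
    (hx : ∀ i, 1 ≤ i → i < t → x i ∈ S i ∧ x i ∈ S (i + 1))
    (hy : ∀ i, 1 ≤ i → i < t → y i ∈ S i ∧ y i ∈ S (i + 1)) :
    Collinear k (⋃ i ∈ Set.Icc 1 t, S i) := by
  have hline : ∀ i, 1 ≤ i → i ≤ t → S i ⊆ line[k, x 1, y 1] := by
    intro i hi
    induction i, hi using Nat.le_induction with
    | base =>
      exact fun _ z hz => (hS 1 le_rfl ht.le).mem_affineSpan_of_mem_of_ne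
        (hx 1 le_rfl ht).1 (hy 1 le_rfl ht).1 hz (hxy 1 le_rfl ht)
    | succ i hi ih =>
      intro hit z hz
      have hit : i < t := hit
      have hle := affineSpan_pair_le_of_mem_of_mem (ih hit.le (hx i hi hit).1)
        (ih hit.le (hy i hi hit).1)
      exact hle ((hS (i + 1) (by omega) hit).mem_affineSpan_of_mem_of_ne
        (hx i hi hit).2 (hy i hi hit).2 hz (hxy i hi hit))
  refine (collinear_pair k (x 1) (y 1)).affineSpan.subset ?_
  simp only [Set.iUnion_subset_iff, Set.mem_Icc]
  exact fun i hi => hline i hi.1 hi.2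

/-- If `q < p`, then `I` forces `a < p` and `K` forces `q < c`, after which `J` puts `a` below and
`c` above `b`; symmetrically if `p < q`, and `p ≠ q` because of `I`. -/
theorem lt_lt_or_lt_lt_of_ordConnected {α : Type*} [LinearOrder α] {I J K : Set α}
    (hI : I.OrdConnected) (hJ : J.OrdConnected) (hK : K.OrdConnected) {a b c p q : α}
    (haI : a ∈ I) (hqI : q ∈ I) (hpI : p ∉ I)
    (hqJ : q ∈ J) (hbJ : b ∈ J) (hpJ : p ∈ J) (haJ : a ∉ J) (hcJ : c ∉ J)
    (hpK : p ∈ K) (hcK : c ∈ K) (hqK : q ∉ K) :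
    a < b ∧ b < c ∨ c < b ∧ b < a := by
  have hpaq : p ∉ Set.uIcc a q := fun h => hpI (hI.uIcc_subset haI hqI h)
  have hqcp : q ∉ Set.uIcc c p := fun h => hqK (hK.uIcc_subset hcK hpK h)
  have habp : a ∉ Set.uIcc b p := fun h => haJ (hJ.uIcc_subset hbJ hpJ h)
  have hcqb : c ∉ Set.uIcc q b := fun h => hcJ (hJ.uIcc_subset hqJ hbJ h)
  simp only [Set.mem_uIcc, not_or, not_and, not_le] at hpaq hqcp habp hcqb
  grind

section Betweenness

variable {𝕜 E : Type*} [Field 𝕜] [LinearOrder 𝕜] [IsStrictOrderedRing 𝕜] [AddCommGroup E]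
  [Module 𝕜 E]

theorem mem_openSegment_of_convex {I J K : Set E}
    (hI : Convex 𝕜 I) (hJ : Convex 𝕜 J) (hK : Convex 𝕜 K) {a b c p q : E}
    (hcol : Collinear 𝕜 {a, b, c, p, q}) (haI : a ∈ I) (hqI : q ∈ I) (hpI : p ∉ I)
    (hqJ : q ∈ J) (hbJ : b ∈ J) (hpJ : p ∈ J) (haJ : a ∉ J) (hcJ : c ∉ J)
    (hpK : p ∈ K) (hcK : c ∈ K) (hqK : q ∉ K) :
    b ∈ openSegment 𝕜 a c := by
  have hab : a ≠ b := fun h => haJ (h ▸ hbJ)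
  have hline : ∀ z ∈ ({a, b, c, p, q} : Set E), ∃ r : 𝕜, AffineMap.lineMap a b r = z :=
    fun z hz => mem_affineSpan_pair_iff_exists_lineMap_eq.1
      (hcol.mem_affineSpan_of_mem_of_ne (by simp) (by simp) hz hab)
  obtain ⟨r, rfl⟩ := hline c (by simp)
  obtain ⟨s, rfl⟩ := hline p (by simp)
  obtain ⟨u, rfl⟩ := hline q (by simp)
  set f : 𝕜 →ᵃ[𝕜] E := AffineMap.lineMap a b
  have hf0 : f 0 = a := AffineMap.lineMap_apply_zero a b
  have hf1 : f 1 = b := AffineMap.lineMap_apply_one a b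
  have hord := lt_lt_or_lt_lt_of_ordConnected (a := 0) (b := 1)
    (convex_iff_ordConnected.1 (hI.affine_preimage f))
    (convex_iff_ordConnected.1 (hJ.affine_preimage f))
    (convex_iff_ordConnected.1 (hK.affine_preimage f))
    (by simpa [hf0]) hqI hpI hqJ (by simpa [hf1]) hpJ (by simpa [hf0]) hcJ hpK hcK hqK
  have h1r : (1 : 𝕜) < r := (hord.resolve_right fun h => lt_asymm h.2 one_pos).2
  rw [← hf0, ← hf1, ← image_openSegment, openSegment_eq_Ioo (one_pos.trans h1r)]
  exact Set.mem_image_of_mem f ⟨one_pos, h1r⟩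

theorem mem_openSegment_of_chain {S : ℕ → Set E} {a x : ℕ → E} {t : ℕ}
    (hS : ∀ i, 1 ≤ i → i ≤ t → Convex 𝕜 (S i)) (hcol : Collinear 𝕜 (⋃ i ∈ Set.Icc 1 t, S i))
    (ha : ∀ k i, 1 ≤ k → k ≤ t → 1 ≤ i → i ≤ t → (a k ∈ S i ↔ k = i))
    (hx : ∀ k i, 1 ≤ k → k < t → 1 ≤ i → i ≤ t → (x k ∈ S i ↔ i = k ∨ i = k + 1))
    {i : ℕ} (hi : 2 ≤ i) (hit : i < t) :
    a i ∈ openSegment 𝕜 (a (i - 1)) (a (i + 1)) := by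
  have ha' : ∀ k j, 1 ≤ k ∧ k ≤ t ∧ 1 ≤ j ∧ j ≤ t → (a k ∈ S j ↔ k = j) :=
    fun k j h => ha k j h.1 h.2.1 h.2.2.1 h.2.2.2
  have hx' : ∀ k j, 1 ≤ k ∧ k < t ∧ 1 ≤ j ∧ j ≤ t → (x k ∈ S j ↔ j = k ∨ j = k + 1) :=
    fun k j h => hx k j h.1 h.2.1 h.2.2.1 h.2.2.2
  have haI : a (i - 1) ∈ S (i - 1) := (ha' _ _ (by omega)).2 rfl
  have hbJ : a i ∈ S i := (ha' _ _ (by omega)).2 rfl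
  have hcK : a (i + 1) ∈ S (i + 1) := (ha' _ _ (by omega)).2 rfl
  have hqI : x (i - 1) ∈ S (i - 1) := (hx' _ _ (by omega)).2 (Or.inl rfl)
  have hqJ : x (i - 1) ∈ S i := (hx' _ _ (by omega)).2 (Or.inr (by omega))
  have hpJ : x i ∈ S i := (hx' _ _ (by omega)).2 (Or.inl rfl)
  have hpK : x i ∈ S (i + 1) := (hx' _ _ (by omega)).2 (Or.inr rfl)
  refine mem_openSegment_of_convex (hS (i - 1) (by omega) (by omega)) (hS i (by omega) hit.le)
    (hS (i + 1) (by omega) hit) (hcol.subset ?_) haI hqI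
    (fun h => absurd ((hx' _ _ (by omega)).1 h) (by omega)) hqJ hbJ hpJ
    (fun h => absurd ((ha' _ _ (by omega)).1 h) (by omega))
    (fun h => absurd ((ha' _ _ (by omega)).1 h) (by omega)) hpK hcK
    (fun h => absurd ((hx' _ _ (by omega)).1 h) (by omega))
  simp only [Set.insert_subset_iff, Set.singleton_subset_iff]
  exact ⟨Set.mem_biUnion ⟨by omega, by omega⟩ haI, Set.mem_biUnion ⟨by omega, hit.le⟩ hbJ,
    Set.mem_biUnion ⟨by omega, hit⟩ hcK, Set.mem_biUnion ⟨by omega, hit.le⟩ hpJ,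
    Set.mem_biUnion ⟨by omega, hit.le⟩ hqJ⟩

end Betweenness

section ChainHypergraph

variable {ι : Type} [DecidableEq ι] {H : FinsetHypergraph ι} {t : ℕ} {v : ℕ → ι}
  {w : ℕ → Fin 2 → ι}

structure IsChainHypergraph (H : FinsetHypergraph ι) (t : ℕ) (v : ℕ → ι) (w : ℕ → Fin 2 → ι) :
    Prop where
  two_le : 2 ≤ t
  v_injOn : ∀ i ∈ Finset.Icc 1 t, ∀ j ∈ Finset.Icc 1 t, v i = v j → i = j
  w_injOn : ∀ i ∈ Finset.Icc 1 (t - 1), ∀ i' ∈ Finset.Icc 1 (t - 1), ∀ j j' : Fin 2,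
    w i j = w i' j' → i = i' ∧ j = j'
  v_ne_w : ∀ i ∈ Finset.Icc 1 t, ∀ i' ∈ Finset.Icc 1 (t - 1), ∀ j : Fin 2, v i ≠ w i' j
  V_eq : H.V = (Finset.Icc 1 t).image v ∪
    (Finset.Icc 1 (t - 1)).image (fun i => w i 0) ∪
    (Finset.Icc 1 (t - 1)).image (fun i => w i 1)
  E_eq : H.E = insert ({v 1, w 1 0, w 1 1} : Finset ι)
    (insert ({v t, w (t - 1) 0, w (t - 1) 1} : Finset ι)
      ((Finset.Icc 2 (t - 1)).image
        (fun i => ({v i, w (i - 1) 0, w (i - 1) 1, w i 0, w i 1} : Finset ι))))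

def chainEdge (t : ℕ) (v : ℕ → ι) (w : ℕ → Fin 2 → ι) (i : ℕ) : Finset ι :=
  if i = 1 then {v 1, w 1 0, w 1 1}
  else if i = t then {v t, w (t - 1) 0, w (t - 1) 1}
  else {v i, w (i - 1) 0, w (i - 1) 1, w i 0, w i 1}

namespace IsChainHypergraph

theorem v_mem_V (hH : IsChainHypergraph H t v w) {k : ℕ} (hk1 : 1 ≤ k) (hkt : k ≤ t) :
    v k ∈ H.V := by
  rw [hH.V_eq]
  exact Finset.mem_union_left _ (Finset.mem_union_left _
    (Finset.mem_image_of_mem v (Finset.mem_Icc.2 ⟨hk1, hkt⟩)))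

theorem w_mem_V (hH : IsChainHypergraph H t v w) {k : ℕ} (hk1 : 1 ≤ k) (hkt : k < t)
    (j : Fin 2) : w k j ∈ H.V := by
  have hk : k ∈ Finset.Icc 1 (t - 1) := Finset.mem_Icc.2 ⟨hk1, by omega⟩
  rw [hH.V_eq]
  fin_cases j
  · exact Finset.mem_union_left _ (Finset.mem_union_right _ (Finset.mem_image_of_mem _ hk))
  · exact Finset.mem_union_right _ (Finset.mem_image_of_mem _ hk)

theorem chainEdge_mem (hH : IsChainHypergraph H t v w) {i : ℕ} (hi1 : 1 ≤ i) (hit : i ≤ t) :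
    chainEdge t v w i ∈ H.E := by
  rw [hH.E_eq, chainEdge]
  split_ifs with h1 hlast
  · exact Finset.mem_insert_self _ _
  · exact Finset.mem_insert_of_mem (Finset.mem_insert_self _ _)
  · exact Finset.mem_insert_of_mem (Finset.mem_insert_of_mem
      (Finset.mem_image_of_mem _ (Finset.mem_Icc.2 ⟨by omega, by omega⟩)))

theorem v_mem_chainEdge_iff (hH : IsChainHypergraph H t v w) {k i : ℕ} (hk1 : 1 ≤ k)
    (hkt : k ≤ t) (hi1 : 1 ≤ i) (hit : i ≤ t) : v k ∈ chainEdge t v w i ↔ k = i := by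
  unfold chainEdge
  constructor
  · intro h
    have hv := hH.v_injOn
    have hvw := hH.v_ne_w
    have ht := hH.two_le
    simp only [Finset.mem_Icc] at hv hvw
    split_ifs at h <;> simp only [Finset.mem_insert, Finset.mem_singleton] at h <;> grind
  · rintro rfl
    split_ifs with h1 hlast
    · simp [h1]
    · simp [hlast]
    · simp

theorem w_mem_chainEdge_iff (hH : IsChainHypergraph H t v w) {k i : ℕ} (j : Fin 2)
    (hk1 : 1 ≤ k) (hkt : k < t) (hi1 : 1 ≤ i) (hit : i ≤ t) :
    w k j ∈ chainEdge t v w i ↔ i = k ∨ i = k + 1 := by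
  have hw := hH.w_injOn
  have hvw := hH.v_ne_w
  have ht := hH.two_le
  simp only [Finset.mem_Icc] at hw hvw
  unfold chainEdge
  constructor
  · intro h
    split_ifs at h <;> simp only [Finset.mem_insert, Finset.mem_singleton] at h <;> grind
  · rintro (rfl | rfl) <;> split_ifs <;> fin_cases j <;> grind

theorem isSegment_β (hH : IsChainHypergraph H t v w) (R : SegmentRep H) {i : ℕ} (hi1 : 1 ≤ i)
    (hit : i ≤ t) : IsSegment (R.β (chainEdge t v w i)) :=
  R.β_isSegment _ (hH.chainEdge_mem hi1 hit)

theorem α_v_mem_β_iff (hH : IsChainHypergraph H t v w) (R : SegmentRep H) (k i : ℕ) (hk1 : 1 ≤ k)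
    (hkt : k ≤ t) (hi1 : 1 ≤ i) (hit : i ≤ t) :
    R.α (v k) ∈ R.β (chainEdge t v w i) ↔ k = i :=
  (R.incidence _ (hH.v_mem_V hk1 hkt) _ (hH.chainEdge_mem hi1 hit)).symm.trans
    (hH.v_mem_chainEdge_iff hk1 hkt hi1 hit)

theorem α_w_mem_β_iff (hH : IsChainHypergraph H t v w) (R : SegmentRep H) (j : Fin 2) (k i : ℕ)
    (hk1 : 1 ≤ k) (hkt : k < t) (hi1 : 1 ≤ i) (hit : i ≤ t) :
    R.α (w k j) ∈ R.β (chainEdge t v w i) ↔ i = k ∨ i = k + 1 :=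
  (R.incidence _ (hH.w_mem_V hk1 hkt j) _ (hH.chainEdge_mem hi1 hit)).symm.trans
    (hH.w_mem_chainEdge_iff j hk1 hkt hi1 hit)

theorem α_w_mem_β_and_mem_β_succ (hH : IsChainHypergraph H t v w) (R : SegmentRep H)
    (j : Fin 2) (k : ℕ) (hk1 : 1 ≤ k) (hkt : k < t) :
    R.α (w k j) ∈ R.β (chainEdge t v w k) ∧ R.α (w k j) ∈ R.β (chainEdge t v w (k + 1)) :=
  ⟨(hH.α_w_mem_β_iff R j k k hk1 hkt hk1 hkt.le).2 (Or.inl rfl),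
    (hH.α_w_mem_β_iff R j k (k + 1) hk1 hkt (by omega) hkt).2 (Or.inr rfl)⟩

theorem collinear_biUnion (hH : IsChainHypergraph H t v w) (R : SegmentRep H) :
    Collinear ℝ (⋃ i ∈ Set.Icc 1 t, R.β (chainEdge t v w i)) := by
  refine collinear_biUnion_of_chain (by have := hH.two_le; omega)
    (fun i hi1 hit => (hH.isSegment_β R hi1 hit).collinear) (fun k hk1 hkt h => ?_)
    (hH.α_w_mem_β_and_mem_β_succ R 0) (hH.α_w_mem_β_and_mem_β_succ R 1)
  have hk : k ∈ Finset.Icc 1 (t - 1) := Finset.mem_Icc.2 ⟨hk1, by omega⟩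
  exact absurd (hH.w_injOn k hk k hk 0 1
    (R.α_inj (hH.w_mem_V hk1 hkt 0) (hH.w_mem_V hk1 hkt 1) h)).2 (by decide)

end IsChainHypergraph

end ChainHypergraph

theorem stmt12 {ι : Type} [DecidableEq ι] (t : ℕ) (ht : 2 ≤ t)
    (v : ℕ → ι) (w : ℕ → Fin 2 → ι)
    (hv : ∀ i ∈ Finset.Icc 1 t, ∀ j ∈ Finset.Icc 1 t, v i = v j → i = j)
    (hw : ∀ i ∈ Finset.Icc 1 (t - 1), ∀ i' ∈ Finset.Icc 1 (t - 1), ∀ j j' : Fin 2,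
      w i j = w i' j' → i = i' ∧ j = j')
    (hvw : ∀ i ∈ Finset.Icc 1 t, ∀ i' ∈ Finset.Icc 1 (t - 1), ∀ j : Fin 2, v i ≠ w i' j)
    (H : FinsetHypergraph ι)
    (hV : H.V = (Finset.Icc 1 t).image v ∪
      (Finset.Icc 1 (t - 1)).image (fun i => w i 0) ∪
      (Finset.Icc 1 (t - 1)).image (fun i => w i 1))
    (hE : H.E = insert ({v 1, w 1 0, w 1 1} : Finset ι)
      (insert ({v t, w (t - 1) 0, w (t - 1) 1} : Finset ι)
        ((Finset.Icc 2 (t - 1)).image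
          (fun i => ({v i, w (i - 1) 0, w (i - 1) 1, w i 0, w i 1} : Finset ι)))))
    (R : SegmentRep H) :
    Collinear ℝ ({p : Pt | ∃ i, 1 ≤ i ∧ i ≤ t ∧ p = R.α (v i)} ∪
      {p : Pt | ∃ i, 1 ≤ i ∧ i ≤ t - 1 ∧ ∃ j : Fin 2, p = R.α (w i j)}) ∧
    ∀ i, 2 ≤ i → i ≤ t - 1 →
      R.α (v i) ∈ openSegment ℝ (R.α (v (i - 1))) (R.α (v (i + 1))) := by
  have hH : IsChainHypergraph H t v w := ⟨ht, hv, hw, hvw, hV, hE⟩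
  have hcol := hH.collinear_biUnion R
  refine ⟨hcol.subset ?_, fun i hi hit => mem_openSegment_of_chain
    (fun k hk1 hkt => (hH.isSegment_β R hk1 hkt).convex) hcol (hH.α_v_mem_β_iff R)
    (hH.α_w_mem_β_iff R 0) hi (by omega)⟩
  rintro z (⟨k, hk1, hkt, rfl⟩ | ⟨k, hk1, hkt, j, rfl⟩)
  · exact Set.mem_biUnion ⟨hk1, hkt⟩ ((hH.α_v_mem_β_iff R k k hk1 hkt hk1 hkt).2 rfl)
  · exact Set.mem_biUnion ⟨hk1, by omega⟩
      (hH.α_w_mem_β_and_mem_β_succ R j k hk1 (by omega)).1
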